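/- arXiv:1811.07855 — 6 statements merged into one kernel-verified Lean document; each statement's English description precedes it below -/
import Mathlib

section
/- Let H be a real inner product space and let p ≥ 2 be a real number. There exists a constant C_p, depending only on p, such that for all x, y ∈ H: | ‖x + y‖^p − ‖x‖^p − p·‖x‖^{p−2}·⟨x, y⟩ | ≤ C_p·( ‖x‖^{p−2}·‖y‖^2 + ‖y‖^p ). -/
/-!
Write `a = ‖x‖`, `b = ‖y‖`. If `a ≤ 2b`, each of the three terms on the left is `O(b^p)`.
Otherwise `‖x + y‖ / a ∈ [1/2, 3/2]` and `‖x + y‖^p = a^p v^(p/2)` with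
`v = ‖x + y‖² / a² = 1 + (2⟪x, y⟫ + b²) / a²`. Since `v ↦ v^(p/2)` has a Lipschitz derivative on
`[1/4, 9/4]`, the second-order Taylor remainder is `O(a^p (v - 1)²) = O(a^(p-2) b²)`, and the
remaining term `(p/2) a^(p-2) b²` is of the same order.
-/

open Real Set
open scoped NNReal

theorem Convex.abs_sub_sub_deriv_mul_le_of_lipschitzOnWith {f f' : ℝ → ℝ} {s : Set ℝ} {L : ℝ≥0}
    (hs : Convex ℝ s) (hf : ∀ u ∈ s, HasDerivWithinAt f (f' u) s u)
    (hf' : LipschitzOnWith L f' s) {x y : ℝ} (hx : x ∈ s) (hy : y ∈ s) :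
    |f y - f x - f' x * (y - x)| ≤ L * (y - x) ^ 2 := by
  have hxy : uIcc x y ⊆ s := hs.ordConnected.uIcc_subset hx hy
  have hderiv : ∀ u ∈ uIcc x y,
      HasDerivWithinAt (fun u => f u - f' x * u) (f' u - f' x) (uIcc x y) u := fun u hu => by
    have := ((hf u (hxy hu)).mono hxy).sub ((hasDerivWithinAt_id u _).const_mul (f' x))
    rwa [mul_one] at this
  have hbound : ∀ u ∈ uIcc x y, ‖f' u - f' x‖ ≤ L * |y - x| := fun u hu =>
    calc ‖f' u - f' x‖ ≤ L * |u - x| := hf'.norm_sub_le (hxy hu) hx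
      _ ≤ L * |y - x| := by gcongr 1; exact abs_sub_left_of_mem_uIcc hu
  have hmvt := (convex_uIcc x y).norm_image_sub_le_of_norm_hasDerivWithin_le hderiv hbound
    left_mem_uIcc right_mem_uIcc
  calc |f y - f x - f' x * (y - x)| = ‖(f y - f' x * y) - (f x - f' x * x)‖ := by
        rw [Real.norm_eq_abs]; ring_nf
    _ ≤ L * |y - x| * ‖y - x‖ := hmvt
    _ = L * (y - x) ^ 2 := by rw [Real.norm_eq_abs, mul_assoc, ← abs_mul, ← sq, abs_sq]

theorem exists_abs_rpow_sub_rpow_sub_mul_le (q : ℝ) {m M : ℝ} (hm : 0 < m) :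
    ∃ K ≥ 0, ∀ v ∈ Icc m M, ∀ w ∈ Icc m M,
      |v ^ q - w ^ q - q * w ^ (q - 1) * (v - w)| ≤ K * (v - w) ^ 2 := by
  have hne : ∀ u ∈ Icc m M, u ≠ 0 := fun u hu => (hm.trans_le hu.1).ne'
  obtain ⟨L, hL⟩ : ∃ L, LipschitzOnWith L (fun u : ℝ => q * u ^ (q - 1)) (Icc m M) :=
    ((contDiffOn_id.rpow_const_of_ne hne).const_smul q).exists_lipschitzOnWith one_ne_zero
      (convex_Icc m M) isCompact_Icc
  refine ⟨L, L.2, fun v hv w hw => ?_⟩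
  exact (convex_Icc m M).abs_sub_sub_deriv_mul_le_of_lipschitzOnWith
    (fun u hu => (hasDerivAt_rpow_const (Or.inl (hne u hu))).hasDerivWithinAt) hL hw hv

theorem exists_abs_rpow_sub_rpow_sub_mul_sq_sub_sq_le (p : ℝ) :
    ∃ K ≥ 0, ∀ a n : ℝ, 0 < a → a / 2 ≤ n → n ≤ 3 * a / 2 →
      |n ^ p - a ^ p - p / 2 * a ^ (p - 2) * (n ^ 2 - a ^ 2)| ≤
        K * a ^ (p - 2) * ((n ^ 2 - a ^ 2) / a) ^ 2 := by
  obtain ⟨K, hK0, hK⟩ := exists_abs_rpow_sub_rpow_sub_mul_le (p / 2) (m := 1 / 4) (M := 9 / 4)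
    (by norm_num)
  refine ⟨K, hK0, fun a n ha hn₁ hn₂ => ?_⟩
  -- With `n = a w` and `v = w²`, the left side is `a^p` times the Taylor remainder of
  -- `v ↦ v^(p/2)` at `v = 1`.
  obtain ⟨w, rfl⟩ : ∃ w, n = a * w := ⟨n / a, by field_simp⟩
  have hw₁ : 1 / 2 ≤ w := by nlinarith
  have hw₂ : w ≤ 3 / 2 := by nlinarith
  have hw0 : 0 ≤ w := by linarith
  have hpow_a : a ^ p = a ^ (p - 2) * a ^ 2 := by
    rw [← rpow_natCast, ← rpow_add ha]; norm_num
  have hpow_w : w ^ p = (w ^ 2) ^ (p / 2) := by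
    rw [← rpow_natCast, ← rpow_mul hw0]; congr 1; push_cast; ring
  have htaylor := hK (w ^ 2) ⟨by nlinarith, by nlinarith⟩ 1 ⟨by norm_num, by norm_num⟩
  rw [one_rpow, one_rpow, mul_one] at htaylor
  have hlhs : (a * w) ^ p - a ^ p - p / 2 * a ^ (p - 2) * ((a * w) ^ 2 - a ^ 2) =
      a ^ (p - 2) * a ^ 2 * ((w ^ 2) ^ (p / 2) - 1 - p / 2 * (w ^ 2 - 1)) := by
    rw [mul_rpow ha.le hw0, hpow_w, hpow_a]; ring
  have hrhs : K * a ^ (p - 2) * (((a * w) ^ 2 - a ^ 2) / a) ^ 2 =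
      a ^ (p - 2) * a ^ 2 * (K * (w ^ 2 - 1) ^ 2) := by
    field_simp
  rw [hlhs, hrhs, abs_mul, abs_of_pos (by positivity)]
  gcongr

theorem abs_norm_add_rpow_sub_le_of_norm_le_two_mul {H : Type*} [NormedAddCommGroup H]
    [InnerProductSpace ℝ H] {p : ℝ} (hp : 2 ≤ p) {x y : H}
    (h : ‖x‖ ≤ 2 * ‖y‖) :
    |‖x + y‖ ^ p - ‖x‖ ^ p - p * ‖x‖ ^ (p - 2) * inner ℝ x y| ≤
      (3 ^ p + (1 + p) * 2 ^ p) * ‖y‖ ^ p := by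
  have hp0 : 0 ≤ p := by linarith
  have hsum : ‖x + y‖ ^ p ≤ (3 * ‖y‖) ^ p :=
    rpow_le_rpow (norm_nonneg _) (by linarith [norm_add_le x y]) hp0
  have hx : ‖x‖ ^ p ≤ (2 * ‖y‖) ^ p := rpow_le_rpow (norm_nonneg _) h hp0
  have hsplit : (2 * ‖y‖) ^ p = (2 * ‖y‖) ^ (p - 2) * ((2 * ‖y‖) * (2 * ‖y‖)) := by
    rw [← sq, ← rpow_natCast, ← rpow_add' (by positivity) (by norm_num; linarith)]; norm_num
  have hinner : |p * ‖x‖ ^ (p - 2) * inner ℝ x y| ≤ p * (2 * ‖y‖) ^ p := by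
    rw [abs_mul, abs_of_nonneg (by positivity), hsplit, ← mul_assoc]
    gcongr
    exact (abs_real_inner_le_norm x y).trans (by gcongr; linarith [norm_nonneg y])
  have hsum0 : 0 ≤ ‖x + y‖ ^ p := by positivity
  have hx0 : 0 ≤ ‖x‖ ^ p := by positivity
  calc _ ≤ (3 * ‖y‖) ^ p + (2 * ‖y‖) ^ p + p * (2 * ‖y‖) ^ p := by
        rw [abs_le]
        constructor <;> linarith [neg_abs_le (p * ‖x‖ ^ (p - 2) * inner ℝ x y),
          le_abs_self (p * ‖x‖ ^ (p - 2) * inner ℝ x y)]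
    _ = (3 ^ p + (1 + p) * 2 ^ p) * ‖y‖ ^ p := by
        rw [mul_rpow (by norm_num) (norm_nonneg _), mul_rpow (by norm_num) (norm_nonneg _)]; ring

theorem exists_abs_norm_add_rpow_sub_le_of_two_mul_norm_lt (p : ℝ) :
    ∃ C ≥ 0, ∀ {H : Type*} [NormedAddCommGroup H] [InnerProductSpace ℝ H] (x y : H),
      2 * ‖y‖ < ‖x‖ →
        |‖x + y‖ ^ p - ‖x‖ ^ p - p * ‖x‖ ^ (p - 2) * inner ℝ x y| ≤
          C * (‖x‖ ^ (p - 2) * ‖y‖ ^ 2) := by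
  obtain ⟨K, hK0, hK⟩ := exists_abs_rpow_sub_rpow_sub_mul_sq_sub_sq_le p
  refine ⟨25 / 4 * K + |p| / 2, by positivity, fun x y h => ?_⟩
  have hx : 0 < ‖x‖ := by linarith [norm_nonneg y]
  have hsq : ‖x + y‖ ^ 2 - ‖x‖ ^ 2 = 2 * inner ℝ x y + ‖y‖ ^ 2 := by
    rw [norm_add_sq_real]; ring
  have hlow : ‖x‖ / 2 ≤ ‖x + y‖ := by
    have := norm_sub_norm_le x (-y)
    rw [norm_neg, sub_neg_eq_add] at this
    linarith
  have hup : ‖x + y‖ ≤ 3 * ‖x‖ / 2 := by linarith [norm_add_le x y]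
  have hquot : ((‖x + y‖ ^ 2 - ‖x‖ ^ 2) / ‖x‖) ^ 2 ≤ 25 / 4 * ‖y‖ ^ 2 := by
    have hbound : |2 * inner ℝ x y + ‖y‖ ^ 2| ≤ 5 / 2 * (‖x‖ * ‖y‖) := by
      have := abs_real_inner_le_norm x y
      have : ‖y‖ ^ 2 ≤ ‖x‖ * ‖y‖ / 2 := by nlinarith [norm_nonneg y]
      calc _ ≤ |2 * inner ℝ x y| + |‖y‖ ^ 2| := abs_add_le _ _
        _ ≤ 5 / 2 * (‖x‖ * ‖y‖) := by rw [abs_mul, abs_two, abs_sq]; linarith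
    rw [hsq, div_pow, div_le_iff₀ (by positivity), ← sq_abs]
    calc _ ≤ (5 / 2 * (‖x‖ * ‖y‖)) ^ 2 := by gcongr
      _ = 25 / 4 * ‖y‖ ^ 2 * ‖x‖ ^ 2 := by ring
  have hcorr : |p / 2 * ‖x‖ ^ (p - 2) * ‖y‖ ^ 2| = |p| / 2 * (‖x‖ ^ (p - 2) * ‖y‖ ^ 2) := by
    rw [abs_mul, abs_mul, abs_div, abs_two, abs_of_nonneg (by positivity : 0 ≤ ‖x‖ ^ (p - 2)),
      abs_sq]; ring
  calc _ = |(‖x + y‖ ^ p - ‖x‖ ^ p - p / 2 * ‖x‖ ^ (p - 2) * (‖x + y‖ ^ 2 - ‖x‖ ^ 2)) +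
        p / 2 * ‖x‖ ^ (p - 2) * ‖y‖ ^ 2| := by rw [hsq]; ring_nf
    _ ≤ K * ‖x‖ ^ (p - 2) * ((‖x + y‖ ^ 2 - ‖x‖ ^ 2) / ‖x‖) ^ 2 +
        |p| / 2 * (‖x‖ ^ (p - 2) * ‖y‖ ^ 2) :=
      (abs_add_le _ _).trans (add_le_add (hK _ _ hx hlow hup) hcorr.le)
    _ ≤ K * ‖x‖ ^ (p - 2) * (25 / 4 * ‖y‖ ^ 2) + |p| / 2 * (‖x‖ ^ (p - 2) * ‖y‖ ^ 2) := by
      gcongr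
    _ = (25 / 4 * K + |p| / 2) * (‖x‖ ^ (p - 2) * ‖y‖ ^ 2) := by ring

/-- Taylor-type estimate for the `p`-th power of the norm in a real inner
product space: there is a constant `C` depending only on `p ≥ 2` such that
`|‖x+y‖^p − ‖x‖^p − p‖x‖^{p-2}⟨x,y⟩| ≤ C(‖x‖^{p-2}‖y‖^2 + ‖y‖^p)`. -/
theorem norm_pow_taylor_estimate (p : ℝ) (hp : 2 ≤ p) :
    ∃ C : ℝ, ∀ (H : Type*) [NormedAddCommGroup H] [InnerProductSpace ℝ H] (x y : H),
      |‖x + y‖ ^ p - ‖x‖ ^ p - p * ‖x‖ ^ (p - 2) * (inner ℝ x y : ℝ)| ≤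
        C * (‖x‖ ^ (p - 2) * ‖y‖ ^ (2 : ℝ) + ‖y‖ ^ p) := by
  obtain ⟨C, hC0, hC⟩ := exists_abs_norm_add_rpow_sub_le_of_two_mul_norm_lt p
  have hD : 0 ≤ 3 ^ p + (1 + p) * 2 ^ p := by
    have : 0 ≤ 1 + p := by linarith
    positivity
  refine ⟨C + (3 ^ p + (1 + p) * 2 ^ p), fun H _ _ x y => ?_⟩
  have hquad : 0 ≤ ‖x‖ ^ (p - 2) * ‖y‖ ^ 2 := by positivity
  have hpow : 0 ≤ ‖y‖ ^ p := by positivity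
  rw [rpow_two]
  rcases le_or_gt ‖x‖ (2 * ‖y‖) with h | h
  · exact (abs_norm_add_rpow_sub_le_of_norm_le_two_mul hp h).trans <|
      mul_le_mul (le_add_of_nonneg_left hC0) (le_add_of_nonneg_left hquad) hpow (by positivity)
  · exact (hC x y h).trans <|
      mul_le_mul (le_add_of_nonneg_right hD) (le_add_of_nonneg_right hpow) hquad (by positivity)
end

section
/- For every real number r ≥ 0 and all real numbers a, b: (|a|^r·a − |b|^r·b)·(a − b) ≥ 2^{−r}·|a − b|^{r+2}. -/
/-!
Write `φ x = |x| ^ r * x`, an odd increasing function equal to `x ^ (r + 1)` for `x ≥ 0`.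
It suffices to show `2 ^ (-r) * (a - b) ^ (r + 1) ≤ φ a - φ b` for `b ≤ a`. When `a` and `b` have
the same sign this follows, via oddness, from the superadditivity of `t ↦ t ^ (r + 1)` on
`[0, ∞)`; when `b ≤ 0 ≤ a` it is the convexity bound `(x + y) ^ p ≤ 2 ^ (p - 1) * (x ^ p + y ^ p)`
with `x = a`, `y = -b`.
-/

open Real

namespace Real

lemma rpow_add_le_mul_rpow_add_rpow {p x y : ℝ} (hx : 0 ≤ x) (hy : 0 ≤ y) (hp : 1 ≤ p) :
    (x + y) ^ p ≤ 2 ^ (p - 1) * (x ^ p + y ^ p) := by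
  lift x to NNReal using hx
  lift y to NNReal using hy
  exact_mod_cast NNReal.rpow_add_le_mul_rpow_add_rpow x y hp

end Real

section SignedPower

variable {r a b : ℝ}

lemma abs_rpow_mul_self_of_nonneg (hr : 0 ≤ r) (ha : 0 ≤ a) : |a| ^ r * a = a ^ (r + 1) := by
  rw [abs_of_nonneg ha, rpow_add_one' ha (by linarith)]

lemma abs_rpow_mul_neg (a : ℝ) : |-a| ^ r * -a = -(|a| ^ r * a) := by
  rw [abs_neg, mul_neg]

lemma rpow_sub_le_abs_rpow_mul_sub_of_nonneg (hr : 0 ≤ r) (hb : 0 ≤ b) (hba : b ≤ a) :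
    (a - b) ^ (r + 1) ≤ |a| ^ r * a - |b| ^ r * b := by
  rw [abs_rpow_mul_self_of_nonneg hr (hb.trans hba), abs_rpow_mul_self_of_nonneg hr hb,
    le_sub_iff_add_le]
  simpa using add_rpow_le_rpow_add (sub_nonneg.2 hba) hb (by linarith : 1 ≤ r + 1)

lemma two_rpow_neg_mul_rpow_sub_le_abs_rpow_mul_sub_of_nonpos_of_nonneg (hr : 0 ≤ r)
    (hb : b ≤ 0) (ha : 0 ≤ a) :
    2 ^ (-r) * (a - b) ^ (r + 1) ≤ |a| ^ r * a - |b| ^ r * b := by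
  obtain ⟨c, hc, rfl⟩ : ∃ c, 0 ≤ c ∧ b = -c := ⟨-b, by linarith, by ring⟩
  rw [abs_rpow_mul_neg, sub_neg_eq_add, sub_neg_eq_add, abs_rpow_mul_self_of_nonneg hr ha,
    abs_rpow_mul_self_of_nonneg hr hc]
  calc 2 ^ (-r) * (a + c) ^ (r + 1)
      ≤ 2 ^ (-r) * (2 ^ (r + 1 - 1) * (a ^ (r + 1) + c ^ (r + 1))) := by
        gcongr
        exact rpow_add_le_mul_rpow_add_rpow ha hc (by linarith)
    _ = a ^ (r + 1) + c ^ (r + 1) := by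
        rw [add_sub_cancel_right, ← mul_assoc, ← rpow_add two_pos, neg_add_cancel, rpow_zero,
          one_mul]

lemma two_rpow_neg_mul_rpow_sub_le_abs_rpow_mul_sub (hr : 0 ≤ r) (hba : b ≤ a) :
    2 ^ (-r) * (a - b) ^ (r + 1) ≤ |a| ^ r * a - |b| ^ r * b := by
  have h2 : (2 : ℝ) ^ (-r) ≤ 1 := rpow_le_one_of_one_le_of_nonpos one_le_two (by linarith)
  rcases le_total 0 b with hb | hb
  · exact (mul_le_of_le_one_left (rpow_nonneg (sub_nonneg.2 hba) _) h2).trans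
      (rpow_sub_le_abs_rpow_mul_sub_of_nonneg hr hb hba)
  rcases le_total a 0 with ha | ha
  · have h := rpow_sub_le_abs_rpow_mul_sub_of_nonneg hr (neg_nonneg.2 ha) (neg_le_neg hba)
    rw [abs_rpow_mul_neg, abs_rpow_mul_neg, neg_sub_neg, neg_sub_neg] at h
    exact (mul_le_of_le_one_left (rpow_nonneg (sub_nonneg.2 hba) _) h2).trans h
  · exact two_rpow_neg_mul_rpow_sub_le_abs_rpow_mul_sub_of_nonpos_of_nonneg hr hb ha

end SignedPower

/-- For every `r ≥ 0` and all `a b : ℝ`: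
`(|a|^r·a − |b|^r·b)·(a − b) ≥ 2^{−r}·|a − b|^{r+2}`. -/
theorem abs_rpow_mul_sub_mul_sub_ge (r : ℝ) (hr : 0 ≤ r) (a b : ℝ) :
    (|a| ^ r * a - |b| ^ r * b) * (a - b) ≥ (2 : ℝ) ^ (-r) * |a - b| ^ (r + 2) := by
  wlog hba : b ≤ a generalizing a b
  · rw [abs_sub_comm]
    convert this b a (le_of_not_ge hba) using 1
    ring
  have hab : 0 ≤ a - b := sub_nonneg.2 hba
  rw [abs_of_nonneg hab, ge_iff_le]
  calc 2 ^ (-r) * (a - b) ^ (r + 2) = 2 ^ (-r) * (a - b) ^ (r + 1) * (a - b) := by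
        rw [mul_assoc, ← rpow_add_one' hab (by linarith)]
        ring_nf
    _ ≤ (|a| ^ r * a - |b| ^ r * b) * (a - b) :=
        mul_le_mul_of_nonneg_right (two_rpow_neg_mul_rpow_sub_le_abs_rpow_mul_sub hr hba) hab
end

section
/- Let p ≥ 2 be a real number. For all real numbers a, b: (|a|^{p/2} − |b|^{p/2})^2 ≤ (p^2/(4(p−1)))·(|a|^{p−2}·a − |b|^{p−2}·b)·(a − b). In particular, if ζ ∈ ℝ satisfies ζ^2 ≤ 4(p−1)/p^2, then ζ^2·(|a|^{p/2} − |b|^{p/2})^2 ≤ (|a|^{p−2}·a − |b|^{p−2}·b)·(a − b). -/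
/-!
For `0 ≤ y ≤ x` we have `x ^ (p/2) - y ^ (p/2) = (p/2) ∫_y^x t ^ (p/2 - 1)` and
`x ^ (p-1) - y ^ (p-1) = (p-1) ∫_y^x t ^ (p-2)`, so for `a`, `b` of the same sign the
inequality is the Cauchy–Schwarz inequality `(∫_y^x f)² ≤ (x - y) ∫_y^x f²` for
`f t = t ^ (p/2 - 1)`.
For `a`, `b` of opposite signs, since `p² / (4(p-1)) ≥ 1` the right-hand side is at least
`|a| ^ p + |b| ^ p`, which dominates the left-hand side.
-/

open MeasureTheory

theorem sq_integral_le_measureReal_univ_mul_integral_sq {α : Type*} [MeasurableSpace α]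
    {μ : Measure α} [IsFiniteMeasure μ] {f : α → ℝ} (hf : Integrable f μ)
    (hf2 : Integrable (fun x ↦ f x ^ 2) μ) :
    (∫ x, f x ∂μ) ^ 2 ≤ μ.real Set.univ * ∫ x, f x ^ 2 ∂μ := by
  have hquad : ∀ c : ℝ,
      0 ≤ μ.real Set.univ * (c * c) + (-2 * ∫ x, f x ∂μ) * c + ∫ x, f x ^ 2 ∂μ := by
    intro c
    have hlin : Integrable (fun x ↦ 2 * c * f x) μ := hf.const_mul _
    have hdiff : Integrable (fun x ↦ f x ^ 2 - 2 * c * f x) μ := hf2.sub hlin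
    have hexp : (fun x ↦ (f x - c) ^ 2) = fun x ↦ (f x ^ 2 - 2 * c * f x) + c ^ 2 := by
      ext x; ring
    have : 0 ≤ ∫ x, (f x - c) ^ 2 ∂μ := integral_nonneg fun x ↦ sq_nonneg (f x - c)
    rw [hexp, integral_add hdiff (integrable_const _), integral_sub hf2 hlin,
      integral_const_mul, integral_const, smul_eq_mul] at this
    linarith
  have hdiscrim := discrim_le_zero hquad
  rw [discrim] at hdiscrim
  linarith

theorem sq_intervalIntegral_le_sub_mul_integral_sq {f : ℝ → ℝ} {a b : ℝ} (hab : a ≤ b)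
    (hf : IntervalIntegrable f volume a b)
    (hf2 : IntervalIntegrable (fun t ↦ f t ^ 2) volume a b) :
    (∫ t in a..b, f t) ^ 2 ≤ (b - a) * ∫ t in a..b, f t ^ 2 := by
  have : IsFiniteMeasure (volume.restrict (Set.Ioc a b)) :=
    isFiniteMeasure_restrict.2 measure_Ioc_lt_top.ne
  rw [intervalIntegral.integral_of_le hab, intervalIntegral.integral_of_le hab,
    ← Real.volume_real_Ioc_of_le hab, ← measureReal_restrict_apply_univ]
  exact sq_integral_le_measureReal_univ_mul_integral_sq
    ((intervalIntegrable_iff_integrableOn_Ioc_of_le hab).1 hf)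
    ((intervalIntegrable_iff_integrableOn_Ioc_of_le hab).1 hf2)

theorem rpow_half_sub_rpow_half_sq_le_of_le {p x y : ℝ} (hp : 1 < p) (hy : 0 ≤ y)
    (hyx : y ≤ x) :
    (x ^ (p / 2) - y ^ (p / 2)) ^ 2 ≤
      p ^ 2 / (4 * (p - 1)) * ((x ^ (p - 1) - y ^ (p - 1)) * (x - y)) := by
  have hα : -1 < p / 2 - 1 := by linarith
  have hint : ∫ t in y..x, t ^ (p / 2 - 1) = (x ^ (p / 2) - y ^ (p / 2)) / (p / 2) := by
    rw [integral_rpow (Or.inl hα), sub_add_cancel]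
  have hsq : Set.EqOn (fun t ↦ (t ^ (p / 2 - 1)) ^ 2) (fun t ↦ t ^ (p - 2)) (Set.uIcc y x) :=
    fun t ht ↦ by
      dsimp only
      rw [← Real.rpow_mul_natCast (hy.trans (Set.uIcc_of_le hyx ▸ ht).1)]
      ring_nf
  have hint_sq : ∫ t in y..x, (t ^ (p / 2 - 1)) ^ 2 = (x ^ (p - 1) - y ^ (p - 1)) / (p - 1) := by
    rw [intervalIntegral.integral_congr hsq, integral_rpow (Or.inl (by linarith)),
      show p - 2 + 1 = p - 1 by ring]
  have hcs := sq_intervalIntegral_le_sub_mul_integral_sq hyx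
    (intervalIntegral.intervalIntegrable_rpow' hα)
    ((intervalIntegral.intervalIntegrable_rpow' (by linarith)).congr
      (hsq.symm.mono Set.uIoc_subset_uIcc))
  rw [hint, hint_sq] at hcs
  calc (x ^ (p / 2) - y ^ (p / 2)) ^ 2
        = (p / 2) ^ 2 * ((x ^ (p / 2) - y ^ (p / 2)) / (p / 2)) ^ 2 := by field_simp
    _ ≤ (p / 2) ^ 2 * ((x - y) * ((x ^ (p - 1) - y ^ (p - 1)) / (p - 1))) := by gcongr
    _ = p ^ 2 / (4 * (p - 1)) * ((x ^ (p - 1) - y ^ (p - 1)) * (x - y)) := by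
        field_simp; ring

theorem rpow_half_sub_rpow_half_sq_le {p x y : ℝ} (hp : 1 < p) (hx : 0 ≤ x) (hy : 0 ≤ y) :
    (x ^ (p / 2) - y ^ (p / 2)) ^ 2 ≤
      p ^ 2 / (4 * (p - 1)) * ((x ^ (p - 1) - y ^ (p - 1)) * (x - y)) := by
  rcases le_total y x with hyx | hxy
  · exact rpow_half_sub_rpow_half_sq_le_of_le hp hy hyx
  · have := rpow_half_sub_rpow_half_sq_le_of_le hp hx hxy
    linarith

theorem rpow_half_sub_rpow_half_sq_le_rpow_sub_one_add_mul_add {p x y : ℝ} (hp : p ≠ 0)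
    (hx : 0 ≤ x) (hy : 0 ≤ y) :
    (x ^ (p / 2) - y ^ (p / 2)) ^ 2 ≤ (x ^ (p - 1) + y ^ (p - 1)) * (x + y) := by
  have hsq {t : ℝ} (ht : 0 ≤ t) : (t ^ (p / 2)) ^ 2 = t ^ (p - 1) * t := by
    rw [← Real.rpow_mul_natCast ht, ← Real.rpow_add_one' ht (by simpa using hp)]
    ring_nf
  have hcross := mul_nonneg (Real.rpow_nonneg hx (p / 2)) (Real.rpow_nonneg hy (p / 2))
  nlinarith [hsq hx, hsq hy, mul_nonneg (Real.rpow_nonneg hx (p - 1)) hy,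
    mul_nonneg (Real.rpow_nonneg hy (p - 1)) hx]

theorem abs_rpow_sub_two_mul_self_of_nonneg {p t : ℝ} (hp : p ≠ 1) (ht : 0 ≤ t) :
    |t| ^ (p - 2) * t = t ^ (p - 1) := by
  rw [abs_of_nonneg ht, ← Real.rpow_add_one' ht (by contrapose! hp; linarith)]
  ring_nf

theorem abs_rpow_half_sub_sq_le {p : ℝ} (hp : 1 < p) (a b : ℝ) :
    (|a| ^ (p / 2) - |b| ^ (p / 2)) ^ 2 ≤
      p ^ 2 / (4 * (p - 1)) * ((|a| ^ (p - 2) * a - |b| ^ (p - 2) * b) * (a - b)) := by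
  wlog ha : 0 ≤ a generalizing a b with H
  · have := H (-a) (-b) (by linarith)
    simp only [abs_neg] at this
    linarith
  rcases le_or_gt 0 b with hb | hb
  · rw [abs_rpow_sub_two_mul_self_of_nonneg hp.ne' ha,
      abs_rpow_sub_two_mul_self_of_nonneg hp.ne' hb, abs_of_nonneg ha, abs_of_nonneg hb]
    exact rpow_half_sub_rpow_half_sq_le hp ha hb
  · obtain ⟨y, hy, rfl⟩ : ∃ y, 0 ≤ y ∧ b = -y := ⟨-b, by linarith, by ring⟩
    have hC : 1 ≤ p ^ 2 / (4 * (p - 1)) :=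
      (one_le_div (by linarith)).2 (by nlinarith [sq_nonneg (p - 2)])
    have hy' : |-y| ^ (p - 2) * -y = -y ^ (p - 1) := by
      rw [abs_neg, mul_neg, abs_rpow_sub_two_mul_self_of_nonneg hp.ne' hy]
    rw [hy', abs_rpow_sub_two_mul_self_of_nonneg hp.ne' ha, abs_of_nonneg ha, abs_neg,
      abs_of_nonneg hy, sub_neg_eq_add, sub_neg_eq_add]
    calc (a ^ (p / 2) - y ^ (p / 2)) ^ 2 ≤ (a ^ (p - 1) + y ^ (p - 1)) * (a + y) :=
          rpow_half_sub_rpow_half_sq_le_rpow_sub_one_add_mul_add (by linarith) ha hy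
      _ ≤ p ^ 2 / (4 * (p - 1)) * ((a ^ (p - 1) + y ^ (p - 1)) * (a + y)) :=
          le_mul_of_one_le_left (by positivity) hC

/-- For `p ≥ 2` and all `a b : ℝ`:
`(|a|^{p/2} − |b|^{p/2})^2 ≤ (p²/(4(p−1)))·(|a|^{p−2}a − |b|^{p−2}b)(a − b)`,
and consequently, if `ζ² ≤ 4(p−1)/p²`, then
`ζ²(|a|^{p/2} − |b|^{p/2})^2 ≤ (|a|^{p−2}a − |b|^{p−2}b)(a − b)`. -/
theorem p_laplace_monotonicity (p : ℝ) (hp : 2 ≤ p) (a b : ℝ) :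
    (|a| ^ (p / 2) - |b| ^ (p / 2)) ^ 2 ≤
        p ^ 2 / (4 * (p - 1)) * ((|a| ^ (p - 2) * a - |b| ^ (p - 2) * b) * (a - b)) ∧
      ∀ ζ : ℝ, ζ ^ 2 ≤ 4 * (p - 1) / p ^ 2 →
        ζ ^ 2 * (|a| ^ (p / 2) - |b| ^ (p / 2)) ^ 2 ≤
          (|a| ^ (p - 2) * a - |b| ^ (p - 2) * b) * (a - b) := by
  have hmain := abs_rpow_half_sub_sq_le (by linarith : 1 < p) a b
  refine ⟨hmain, fun ζ hζ ↦ ?_⟩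
  have hp1 : 0 < p - 1 := by linarith
  calc ζ ^ 2 * (|a| ^ (p / 2) - |b| ^ (p / 2)) ^ 2
      ≤ 4 * (p - 1) / p ^ 2 * (|a| ^ (p / 2) - |b| ^ (p / 2)) ^ 2 := by gcongr
    _ ≤ 4 * (p - 1) / p ^ 2 *
        (p ^ 2 / (4 * (p - 1)) * ((|a| ^ (p - 2) * a - |b| ^ (p - 2) * b) * (a - b))) := by
        gcongr
    _ = (|a| ^ (p - 2) * a - |b| ^ (p - 2) * b) * (a - b) := by field_simp
end

section
/- Let (X, Σ, μ) be a measure space, let p ≥ 2 be a real number, and let f, g : X → ℝ be measurable functions with ∫_X |f|^p dμ < ∞ and ∫_X |g|^p dμ < ∞. Then the function x ↦ (|f(x)|^{p−2}·f(x) − |g(x)|^{p−2}·g(x))·(f(x) − g(x)) is nonnegative and ∫_X (|f|^{p−2}·f − |g|^{p−2}·g)·(f − g) dμ ≥ 2^{2−p}·∫_X |f − g|^p dμ. -/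
/-!
Pointwise, with `φ(t) = |t|^{p-2} t`, one may assume `b ≤ a` and `0 ≤ a + b` by the symmetries
`(a, b) ↦ (b, a)` and `(a, b) ↦ (-b, -a)`. If `0 ≤ b`, superadditivity of `t ↦ t^{p-1}` gives
`φ(a) - φ(b) ≥ (a - b)^{p-1}`; if `b < 0`, convexity gives
`(a + |b|)^{p-1} ≤ 2^{p-2} (φ(a) - φ(b))`. Integrating requires the integrand and `|f - g|^p` to be integrable, which follows from
pointwise domination by a multiple of `|f|^p + |g|^p`.
-/

open MeasureTheory

namespace Real

lemma rpow_sub_one_mul_self {x q : ℝ} (hx : 0 ≤ x) (hq : q ≠ 0) : x ^ (q - 1) * x = x ^ q := by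
  rw [← rpow_add_one' hx (by rwa [sub_add_cancel]), sub_add_cancel]

lemma abs_rpow_sub_two_mul_self_of_nonneg {p a : ℝ} (hp : p ≠ 1) (ha : 0 ≤ a) :
    |a| ^ (p - 2) * a = a ^ (p - 1) := by
  rw [abs_of_nonneg ha, show p - 2 = p - 1 - 1 by ring,
    rpow_sub_one_mul_self ha (sub_ne_zero.2 hp)]

lemma abs_abs_rpow_sub_two_mul_self {p : ℝ} (hp : p ≠ 1) (a : ℝ) :
    |(|a| ^ (p - 2) * a)| = |a| ^ (p - 1) := by
  rw [abs_mul, abs_of_nonneg (rpow_nonneg (abs_nonneg a) _),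
    ← abs_rpow_sub_two_mul_self_of_nonneg hp (abs_nonneg a), abs_abs]

lemma sub_rpow_le_rpow_sub_rpow {q a b : ℝ} (hq : 1 ≤ q) (hb : 0 ≤ b) (hba : b ≤ a) :
    (a - b) ^ q ≤ a ^ q - b ^ q := by
  have h := add_rpow_le_rpow_add hb (sub_nonneg.2 hba) hq
  rw [add_sub_cancel] at h
  linarith

lemma add_rpow_le_two_rpow_mul_rpow_add_rpow {q a b : ℝ} (hq : 1 ≤ q) (ha : 0 ≤ a)
    (hb : 0 ≤ b) : (a + b) ^ q ≤ 2 ^ (q - 1) * (a ^ q + b ^ q) := by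
  lift a to NNReal using ha
  lift b to NNReal using hb
  exact_mod_cast NNReal.rpow_add_le_mul_rpow_add_rpow a b hq

lemma two_rpow_mul_add_rpow_le {p a c : ℝ} (hp : 2 ≤ p) (ha : 0 ≤ a) (hc : 0 ≤ c) :
    2 ^ (2 - p) * (a + c) ^ p ≤ (a ^ (p - 1) + c ^ (p - 1)) * (a + c) := by
  have hmean := add_rpow_le_two_rpow_mul_rpow_add_rpow (q := p - 1) (by linarith) ha hc
  calc 2 ^ (2 - p) * (a + c) ^ p = 2 ^ (2 - p) * (a + c) ^ (p - 1) * (a + c) := by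
        rw [mul_assoc, rpow_sub_one_mul_self (by positivity) (by linarith)]
    _ ≤ 2 ^ (2 - p) * (2 ^ (p - 1 - 1) * (a ^ (p - 1) + c ^ (p - 1))) * (a + c) := by
        gcongr
    _ = (a ^ (p - 1) + c ^ (p - 1)) * (a + c) := by
        rw [← mul_assoc, ← rpow_add two_pos, show 2 - p + (p - 1 - 1) = 0 by ring, rpow_zero,
          one_mul]

theorem two_rpow_mul_abs_sub_rpow_le {p : ℝ} (hp : 2 ≤ p) (a b : ℝ) :
    2 ^ (2 - p) * |a - b| ^ p ≤ (|a| ^ (p - 2) * a - |b| ^ (p - 2) * b) * (a - b) := by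
  wlog hba : b ≤ a generalizing a b
  · convert this b a (by linarith) using 1
    · rw [abs_sub_comm]
    · ring
  wlog hab : 0 ≤ a + b generalizing a b
  · convert this (-b) (-a) (by linarith) (by linarith) using 1
    · rw [neg_sub_neg]
    · simp only [abs_neg]
      ring
  have ha : 0 ≤ a := by linarith
  have hp1 : p ≠ 1 := by linarith
  rw [abs_of_nonneg (sub_nonneg.2 hba), abs_rpow_sub_two_mul_self_of_nonneg hp1 ha]
  rcases le_total 0 b with hb | hb
  · rw [abs_rpow_sub_two_mul_self_of_nonneg hp1 hb]
    calc 2 ^ (2 - p) * (a - b) ^ p ≤ (a - b) ^ p :=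
          mul_le_of_le_one_left (by linarith [rpow_nonneg (sub_nonneg.2 hba) p])
            (rpow_le_one_of_one_le_of_nonpos one_le_two (by linarith))
      _ = (a - b) ^ (p - 1) * (a - b) :=
          (rpow_sub_one_mul_self (sub_nonneg.2 hba) (by linarith)).symm
      _ ≤ (a ^ (p - 1) - b ^ (p - 1)) * (a - b) := by
          gcongr
          exact sub_rpow_le_rpow_sub_rpow (by linarith) hb hba
  · have hb' : |b| ^ (p - 2) * b = -(-b) ^ (p - 1) := by
      rw [← abs_rpow_sub_two_mul_self_of_nonneg hp1 (neg_nonneg.2 hb), abs_neg]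
      ring
    simpa [hb', ← sub_eq_add_neg] using two_rpow_mul_add_rpow_le hp ha (neg_nonneg.2 hb)

theorem abs_rpow_sub_two_mul_sub_mul_sub_le {p : ℝ} (hp : 1 < p) (a b : ℝ) :
    |(|a| ^ (p - 2) * a - |b| ^ (p - 2) * b) * (a - b)| ≤ 4 * (|a| ^ p + |b| ^ p) := by
  set m := max |a| |b|
  have hm : 0 ≤ m := (abs_nonneg a).trans (le_max_left _ _)
  have hφ (t : ℝ) (ht : |t| ≤ m) : |(|t| ^ (p - 2) * t)| ≤ m ^ (p - 1) := by
    rw [abs_abs_rpow_sub_two_mul_self hp.ne']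
    exact rpow_le_rpow (abs_nonneg t) ht (by linarith)
  calc |(|a| ^ (p - 2) * a - |b| ^ (p - 2) * b) * (a - b)|
        ≤ (m ^ (p - 1) + m ^ (p - 1)) * (m + m) := by
        rw [abs_mul]
        gcongr
        · exact (abs_sub _ _).trans (add_le_add (hφ a (le_max_left _ _)) (hφ b (le_max_right _ _)))
        · exact (abs_sub _ _).trans (add_le_add (le_max_left _ _) (le_max_right _ _))
    _ = 4 * m ^ p := by
        rw [← rpow_sub_one_mul_self (q := p) hm (by linarith)]
        ring
    _ ≤ 4 * (|a| ^ p + |b| ^ p) := by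
        have := rpow_nonneg (abs_nonneg a) p
        have := rpow_nonneg (abs_nonneg b) p
        obtain h | h : m = |a| ∨ m = |b| := max_choice _ _ <;> rw [h] <;> linarith

theorem abs_sub_rpow_le {p : ℝ} (hp : 1 ≤ p) (a b : ℝ) :
    |a - b| ^ p ≤ 2 ^ (p - 1) * (|a| ^ p + |b| ^ p) :=
  (rpow_le_rpow (abs_nonneg _) (abs_sub a b) (by linarith)).trans
    (add_rpow_le_two_rpow_mul_rpow_add_rpow hp (abs_nonneg a) (abs_nonneg b))

end Real

lemma integrable_abs_rpow_of_lintegral_lt_top {X : Type*} [MeasurableSpace X] {μ : Measure X}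
    {f : X → ℝ} {p : ℝ} (hf : Measurable f) (h : ∫⁻ x, ENNReal.ofReal (|f x| ^ p) ∂μ < ⊤) :
    Integrable (fun x => |f x| ^ p) μ :=
  (lintegral_ofReal_ne_top_iff_integrable (hf.abs.pow_const p).aestronglyMeasurable
    (ae_of_all _ fun x => by positivity)).1 h.ne

/-- Integrated strong monotonicity of the `p`-Laplace nonlinearity: for `p ≥ 2`
and `f, g` measurable with `∫|f|^p, ∫|g|^p < ∞`, the integrand
`(|f|^{p−2}f − |g|^{p−2}g)(f − g)` is nonnegative and
`∫(|f|^{p−2}f − |g|^{p−2}g)(f − g) dμ ≥ 2^{2−p} ∫|f−g|^p dμ`. -/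
theorem integral_p_laplace_strong_monotonicity
    {X : Type*} [MeasurableSpace X] (μ : Measure X) (p : ℝ) (hp : 2 ≤ p)
    (f g : X → ℝ) (hf : Measurable f) (hg : Measurable g)
    (hfp : ∫⁻ x, ENNReal.ofReal (|f x| ^ p) ∂μ < ⊤)
    (hgp : ∫⁻ x, ENNReal.ofReal (|g x| ^ p) ∂μ < ⊤) :
    (∀ x, 0 ≤ (|f x| ^ (p - 2) * f x - |g x| ^ (p - 2) * g x) * (f x - g x)) ∧
      ∫ x, (|f x| ^ (p - 2) * f x - |g x| ^ (p - 2) * g x) * (f x - g x) ∂μ ≥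
        (2 : ℝ) ^ (2 - p) * ∫ x, |f x - g x| ^ p ∂μ := by
  have hkey x := Real.two_rpow_mul_abs_sub_rpow_le hp (f x) (g x)
  refine ⟨fun x => (by positivity : (0 : ℝ) ≤ _).trans (hkey x), ?_⟩
  have hfg : Integrable (fun x => |f x| ^ p + |g x| ^ p) μ :=
    (integrable_abs_rpow_of_lintegral_lt_top hf hfp).add
      (integrable_abs_rpow_of_lintegral_lt_top hg hgp)
  have hsub : Integrable (fun x => |f x - g x| ^ p) μ :=
    (hfg.const_mul _).mono' (Measurable.aestronglyMeasurable (by fun_prop))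
      (ae_of_all _ fun x => by
        rw [Real.norm_of_nonneg (by positivity)]
        exact Real.abs_sub_rpow_le (by linarith) (f x) (g x))
  have hprod : Integrable
      (fun x => (|f x| ^ (p - 2) * f x - |g x| ^ (p - 2) * g x) * (f x - g x)) μ :=
    (hfg.const_mul 4).mono' (Measurable.aestronglyMeasurable (by fun_prop))
      (ae_of_all _ fun x => Real.abs_rpow_sub_two_mul_sub_mul_sub_le (by linarith) (f x) (g x))
  rw [ge_iff_le, ← integral_const_mul]
  exact integral_mono (hsub.const_mul _) hprod hkey
end

section
/- Let V be a separable real Banach space with continuous dual V*, let H be a real normed space, and let j : V → H be a continuous linear map. Let A : V → V* and suppose there exist real constants α > 1, β ≥ 0, L ≥ 0, f ≥ 0 and K ≥ 0 such that: (hemicontinuity) for all x, y, z ∈ V the map ε ↦ (A(x + εy))(z) is continuous from ℝ to ℝ; (local monotonicity) 2·(A(x) − A(y))(x − y) ≤ L·(1 + ‖y‖_V^α)·(1 + ‖j(y)‖_H^β)·‖j(x − y)‖_H^2 for all x, y ∈ V; (growth) ‖A(x)‖_{V*}^{α/(α−1)} ≤ (f + K·‖x‖_V^α)·(1 + ‖j(x)‖_H^β)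 for all x ∈ V. Then A is demicontinuous: whenever a sequence (x_n) converges to x in the norm of V, one has (A(x_n))(z) → (A(x))(z) for every z ∈ V, i.e. A(x_n) converges to A(x) in the weak-* topology of V*. -/
/-
Since `xₙ → x₀`, the growth bound makes `A xₙ` bounded in `V*`, so every subsequence of
`(A xₙ) z` has a further convergent subsequence, with limit `c` say; it suffices to show
`c = (A x₀) z`. Testing local monotonicity against `y = x₀ + ε z` and passing to the limit
(Minty's trick) gives `ε ((A (x₀ + ε z)) z - c) ≤ C ε²` for `|ε| ≤ 1`. Hence
`ε ↦ ε ((A (x₀ + ε z)) z - c) - C ε²` has a local maximum at `0`, and by hemicontinuity its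
derivative there is `(A x₀) z - c`, which must therefore vanish.
-/

open Filter Topology

theorem hasDerivAt_id_mul_of_continuousAt {g : ℝ → ℝ} (hg : ContinuousAt g 0) :
    HasDerivAt (fun ε => ε * g ε) (g 0) 0 := by
  rw [hasDerivAt_iff_tendsto_slope]
  refine (hg.tendsto.mono_left nhdsWithin_le_nhds).congr' ?_
  filter_upwards [self_mem_nhdsWithin] with ε (hε : ε ≠ 0)
  rw [slope_def_field]
  field_simp
  ring

theorem eq_zero_of_eventually_mul_le_sq {g : ℝ → ℝ} {C : ℝ} (hg : ContinuousAt g 0)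
    (h : ∀ᶠ ε in 𝓝 0, ε * g ε ≤ C * ε ^ 2) : g 0 = 0 := by
  have hmax : IsLocalMax (fun ε => ε * g ε - C * ε ^ 2) 0 := by
    filter_upwards [h] with ε hε
    simpa using hε
  have hderiv : HasDerivAt (fun ε => ε * g ε - C * ε ^ 2) (g 0) 0 := by
    have hd := (hasDerivAt_id_mul_of_continuousAt hg).sub
      ((hasDerivAt_pow 2 (0 : ℝ)).const_mul C)
    norm_num at hd
    exact hd
  exact hmax.hasDerivAt_eq_zero hderiv

theorem le_max_one_of_rpow_le {t p M : ℝ} (hp : 1 ≤ p) (h : t ^ p ≤ M) :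
    t ≤ max 1 M := by
  rcases le_or_gt t 1 with ht1 | ht1
  · exact ht1.trans (le_max_left _ _)
  · calc t = t ^ (1 : ℝ) := (Real.rpow_one t).symm
      _ ≤ t ^ p := Real.rpow_le_rpow_of_exponent_le ht1.le hp
      _ ≤ M := h
      _ ≤ max 1 M := le_max_right _ _

theorem tendsto_apply_sub_of_tendsto_apply {ι E : Type*} [NormedAddCommGroup E] [NormedSpace ℝ E]
    {l : Filter ι} {φ : ι → E →L[ℝ] ℝ} {y : ι → E} {x z : E} {B c : ℝ}
    (hy : Tendsto y l (𝓝 x)) (hφ : ∀ i, ‖φ i‖ ≤ B) (hc : Tendsto (fun i => φ i z) l (𝓝 c))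
    (ε : ℝ) : Tendsto (fun i => φ i (y i - (x + ε • z))) l (𝓝 (-(ε * c))) := by
  have hnull : Tendsto (fun i => φ i (y i - x)) l (𝓝 0) := by
    refine squeeze_zero_norm (fun i => ((φ i).le_opNorm _).trans
      (mul_le_mul_of_nonneg_right (hφ i) (norm_nonneg _))) ?_
    simpa using ((tendsto_iff_norm_sub_tendsto_zero.mp hy).const_mul B)
  have hsplit : ∀ i, φ i (y i - (x + ε • z)) = φ i (y i - x) + -(ε * φ i z) := by
    intro i
    rw [sub_add_eq_sub_sub, map_sub, map_smul, smul_eq_mul]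
    ring
  simpa only [hsplit, zero_add] using hnull.add (hc.const_mul ε).neg

section

variable {V H : Type*} [NormedAddCommGroup V] [NormedSpace ℝ V]
  [NormedAddCommGroup H] [NormedSpace ℝ H] (j : V →L[ℝ] H) {α β : ℝ}

theorem add_mul_rpow_mul_one_add_rpow_le {a b R : ℝ} (ha : 0 ≤ a) (hb : 0 ≤ b) (hα : 0 ≤ α)
    (hβ : 0 ≤ β) {y : V} (hy : ‖y‖ ≤ R) :
    (a + b * ‖y‖ ^ α) * (1 + ‖j y‖ ^ β) ≤ (a + b * R ^ α) * (1 + (‖j‖ * R) ^ β) := by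
  have hjy : ‖j y‖ ≤ ‖j‖ * R := (j.le_opNorm y).trans (by gcongr)
  have hR : 0 ≤ R := (norm_nonneg y).trans hy
  gcongr

variable {A : V → V →L[ℝ] ℝ} {L f K : ℝ}

theorem norm_le_of_growth (hα : 1 < α) (hβ : 0 ≤ β) (hf : 0 ≤ f) (hK : 0 ≤ K)
    (growth : ∀ x : V, ‖A x‖ ^ (α / (α - 1)) ≤ (f + K * ‖x‖ ^ α) * (1 + ‖j x‖ ^ β))
    {R : ℝ} {v : V} (hv : ‖v‖ ≤ R) :
    ‖A v‖ ≤ max 1 ((f + K * R ^ α) * (1 + (‖j‖ * R) ^ β)) := by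
  have hp : 1 ≤ α / (α - 1) := by rw [le_div_iff₀ (by linarith)]; linarith
  exact le_max_one_of_rpow_le hp
    ((growth v).trans (add_mul_rpow_mul_one_add_rpow_le j hf hK (by linarith) hβ hv))

theorem mul_apply_sub_le_of_tendsto
    (locmono : ∀ x y : V,
      2 * (A x - A y) (x - y) ≤
        L * (1 + ‖y‖ ^ α) * (1 + ‖j y‖ ^ β) * ‖j (x - y)‖ ^ (2 : ℝ))
    {Y : ℕ → V} {x₀ z : V} {B c : ℝ} (hY : Tendsto Y atTop (𝓝 x₀)) (hB : ∀ n, ‖A (Y n)‖ ≤ B)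
    (hc : Tendsto (fun n => A (Y n) z) atTop (𝓝 c)) (ε : ℝ) :
    2 * (ε * (A (x₀ + ε • z) z - c)) ≤
      L * (1 + ‖x₀ + ε • z‖ ^ α) * (1 + ‖j (x₀ + ε • z)‖ ^ β) * (ε ^ 2 * ‖j z‖ ^ 2) := by
  set y := x₀ + ε • z
  have hlhs : Tendsto (fun n => 2 * (A (Y n) - A y) (Y n - y)) atTop
      (𝓝 (2 * (-(ε * c) - A y (x₀ - y)))) :=
    ((tendsto_apply_sub_of_tendsto_apply hY hB hc ε).sub
      (((A y).continuous.tendsto _).comp (hY.sub_const y))).const_mul 2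
  have hrhs : Tendsto (fun n => L * (1 + ‖y‖ ^ α) * (1 + ‖j y‖ ^ β) * ‖j (Y n - y)‖ ^ (2 : ℝ))
      atTop (𝓝 (L * (1 + ‖y‖ ^ α) * (1 + ‖j y‖ ^ β) * ‖j (x₀ - y)‖ ^ (2 : ℝ))) := by
    refine ((((j.continuous.tendsto _).comp (hY.sub_const y)).norm.rpow_const ?_).const_mul _)
    exact Or.inr zero_le_two
  have hxy : x₀ - y = (-ε) • z := by simp [y]
  have hlim := le_of_tendsto_of_tendsto' hlhs hrhs fun n => locmono (Y n) y
  rw [hxy, map_smul, map_smul, norm_smul, Real.rpow_two, mul_pow, Real.norm_eq_abs, sq_abs,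
    neg_sq, smul_eq_mul] at hlim
  linarith

theorem apply_eq_of_tendsto (hα : 0 ≤ α) (hβ : 0 ≤ β) (hL : 0 ≤ L)
    (locmono : ∀ x y : V,
      2 * (A x - A y) (x - y) ≤
        L * (1 + ‖y‖ ^ α) * (1 + ‖j y‖ ^ β) * ‖j (x - y)‖ ^ (2 : ℝ))
    {Y : ℕ → V} {x₀ z : V} {B c : ℝ} (hemicont : Continuous fun ε : ℝ => A (x₀ + ε • z) z)
    (hY : Tendsto Y atTop (𝓝 x₀)) (hB : ∀ n, ‖A (Y n)‖ ≤ B)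
    (hc : Tendsto (fun n => A (Y n) z) atTop (𝓝 c)) :
    A x₀ z = c := by
  set C := L * (1 + (‖x₀‖ + ‖z‖) ^ α) * (1 + (‖j‖ * (‖x₀‖ + ‖z‖)) ^ β)
  have hweight : ∀ ε : ℝ, |ε| ≤ 1 →
      L * (1 + ‖x₀ + ε • z‖ ^ α) * (1 + ‖j (x₀ + ε • z)‖ ^ β) ≤ C := by
    intro ε hε
    have hy : ‖x₀ + ε • z‖ ≤ ‖x₀‖ + ‖z‖ := by
      refine (norm_add_le _ _).trans ?_
      rw [norm_smul, Real.norm_eq_abs]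
      gcongr
      exact mul_le_of_le_one_left (norm_nonneg z) hε
    have hbound := add_mul_rpow_mul_one_add_rpow_le j zero_le_one zero_le_one hα hβ hy
    simpa only [C, one_mul, mul_assoc] using mul_le_mul_of_nonneg_left hbound hL
  have hsq : ∀ᶠ ε in 𝓝 (0 : ℝ), ε * (A (x₀ + ε • z) z - c) ≤ C * ‖j z‖ ^ 2 / 2 * ε ^ 2 := by
    filter_upwards [Metric.closedBall_mem_nhds (0 : ℝ) one_pos] with ε hε
    rw [Metric.mem_closedBall, Real.dist_0_eq_abs] at hε
    have hminty := mul_apply_sub_le_of_tendsto j locmono hY hB hc ε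
    have hC := mul_le_mul_of_nonneg_right (hweight ε hε)
      (by positivity : 0 ≤ ε ^ 2 * ‖j z‖ ^ 2)
    linarith
  have h0 := eq_zero_of_eventually_mul_le_sq (hemicont.continuousAt.sub continuousAt_const) hsq
  simpa [sub_eq_zero] using h0

end

theorem demicontinuous_of_hemicontinuous_general
    {V : Type*} [NormedAddCommGroup V] [NormedSpace ℝ V]
    {H : Type*} [NormedAddCommGroup H] [NormedSpace ℝ H]
    (j : V →L[ℝ] H) (A : V → V →L[ℝ] ℝ)
    (α β L f K : ℝ) (hα : 1 < α) (hβ : 0 ≤ β) (hL : 0 ≤ L) (hf : 0 ≤ f) (hK : 0 ≤ K)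
    (hemicont : ∀ x y z : V, Continuous fun ε : ℝ => (A (x + ε • y)) z)
    (locmono : ∀ x y : V,
      2 * (A x - A y) (x - y) ≤
        L * (1 + ‖y‖ ^ α) * (1 + ‖j y‖ ^ β) * ‖j (x - y)‖ ^ (2 : ℝ))
    (growth : ∀ x : V, ‖A x‖ ^ (α / (α - 1)) ≤ (f + K * ‖x‖ ^ α) * (1 + ‖j x‖ ^ β)) :
    ∀ (x : ℕ → V) (x₀ : V), Tendsto x atTop (𝓝 x₀) →
      ∀ z : V, Tendsto (fun n => (A (x n)) z) atTop (𝓝 ((A x₀) z)) := by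
  intro x x₀ hx z
  obtain ⟨R, hR⟩ := hx.norm.bddAbove_range
  set B := max 1 ((f + K * R ^ α) * (1 + (‖j‖ * R) ^ β))
  have hB : ∀ n, ‖A (x n)‖ ≤ B := fun n =>
    norm_le_of_growth j hα hβ hf hK growth (hR (Set.mem_range_self n))
  have hAz : ∀ n, A (x n) z ∈ Metric.closedBall 0 (B * ‖z‖) := fun n =>
    mem_closedBall_zero_iff.mpr ((A (x n)).le_of_opNorm_le (hB n) z)
  refine tendsto_of_subseq_tendsto fun ns hns => ?_
  obtain ⟨c, -, φ, hφ, hc⟩ :=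
    tendsto_subseq_of_bounded Metric.isBounded_closedBall fun n => hAz (ns n)
  refine ⟨φ, ?_⟩
  rwa [apply_eq_of_tendsto j (by linarith) hβ hL locmono (hemicont x₀ z z)
    (hx.comp (hns.comp hφ.tendsto_atTop)) (fun n => hB _) hc]

/-- Demicontinuity of a hemicontinuous, locally monotone operator with the
growth condition: if `xₙ → x` in norm, then `A xₙ ⇀ A x` in the weak-* sense,
i.e. `(A xₙ) z → (A x) z` for every `z`. -/
theorem demicontinuous_of_hemicontinuous
    {V : Type*} [NormedAddCommGroup V] [NormedSpace ℝ V] [CompleteSpace V]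
    [TopologicalSpace.SeparableSpace V]
    {H : Type*} [NormedAddCommGroup H] [NormedSpace ℝ H]
    (j : V →L[ℝ] H) (A : V → V →L[ℝ] ℝ)
    (α β L f K : ℝ) (hα : 1 < α) (hβ : 0 ≤ β) (hL : 0 ≤ L) (hf : 0 ≤ f) (hK : 0 ≤ K)
    (hemicont : ∀ x y z : V, Continuous fun ε : ℝ => (A (x + ε • y)) z)
    (locmono : ∀ x y : V,
      2 * (A x - A y) (x - y) ≤
        L * (1 + ‖y‖ ^ α) * (1 + ‖j y‖ ^ β) * ‖j (x - y)‖ ^ (2 : ℝ))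
    (growth : ∀ x : V, ‖A x‖ ^ (α / (α - 1)) ≤ (f + K * ‖x‖ ^ α) * (1 + ‖j x‖ ^ β)) :
    ∀ (x : ℕ → V) (x₀ : V), Tendsto x atTop (𝓝 x₀) →
      ∀ z : V, Tendsto (fun n => (A (x n)) z) atTop (𝓝 ((A x₀) z)) :=
  demicontinuous_of_hemicontinuous_general j A α β L f K hα hβ hL hf hK hemicont locmono growth
end

section
/- Let V be a real normed space, A a continuous linear functional on V, and x ∈ V. Let α > 1, β ≥ 0, p_0 ≥ β + 2, K ≥ 0, f ≥ 0 and h ≥ 0 be real numbers such that ‖A‖_{V*}^{α/(α−1)} ≤ (f + K·‖x‖_V^α)·(1 + h^β). Then there exists a constant C, depending only on α, β, K and p_0 (and not on x, A, f or h), such that |A(x)| ≤ C·( f + f^{p_0/2} + ‖x‖_V^α + h^β·‖x‖_V^α + (1 + h)^{p_0} ). -/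
/-! Young's inequality with the conjugate exponents `α/(α-1)` and `α` turns
`|A x| ≤ ‖A‖ ‖x‖` into `|A x| ≤ ‖A‖^{α/(α-1)} + ‖x‖^α`, hence into the growth bound plus
`‖x‖^α`. Expanding the growth bound leaves the cross term `f h^β`, which weighted AM-GM with
weights `(p₀-β)/p₀` and `β/p₀` bounds by `f^{p₀/(p₀-β)} + h^{p₀}`; as
`1 ≤ p₀/(p₀-β) ≤ p₀/2`, that power of `f` is at most `f + f^{p₀/2}`. -/

open Real

namespace Real

lemma mul_le_rpow_add_rpow {p q c t : ℝ} (hpq : p.HolderConjugate q) (hc : 0 ≤ c)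
    (ht : 0 ≤ t) : c * t ≤ c ^ q + t ^ p := by
  have hyoung := young_inequality_of_nonneg ht hc hpq
  have hp : t ^ p / p ≤ t ^ p := div_le_self (rpow_nonneg ht p) hpq.lt.le
  have hq : c ^ q / q ≤ c ^ q := div_le_self (rpow_nonneg hc q) hpq.symm.lt.le
  linarith

lemma mul_rpow_le_rpow_add_rpow {f h β p : ℝ} (hf : 0 ≤ f) (hh : 0 ≤ h) (hβ : 0 ≤ β)
    (hβp : β < p) : f * h ^ β ≤ f ^ (p / (p - β)) + h ^ p := by
  have hp : 0 < p := hβ.trans_lt hβp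
  have hpβ : 0 < p - β := sub_pos.2 hβp
  have hamgm := geom_mean_le_arith_mean2_weighted (div_nonneg hpβ.le hp.le) (div_nonneg hβ hp.le)
    (rpow_nonneg hf (p / (p - β))) (rpow_nonneg hh p) (by field_simp; ring)
  have hexp₁ : p / (p - β) * ((p - β) / p) = 1 := by field_simp
  have hexp₂ : p * (β / p) = β := by field_simp
  rw [← rpow_mul hf, ← rpow_mul hh, hexp₁, hexp₂, rpow_one] at hamgm
  have hw₁ : (p - β) / p * f ^ (p / (p - β)) ≤ f ^ (p / (p - β)) :=
    mul_le_of_le_one_left (rpow_nonneg hf _) ((div_le_one hp).2 (by linarith))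
  have hw₂ : β / p * h ^ p ≤ h ^ p :=
    mul_le_of_le_one_left (rpow_nonneg hh _) ((div_le_one hp).2 hβp.le)
  linarith

lemma rpow_le_self_add_rpow {x r s : ℝ} (hx : 0 ≤ x) (hr : 1 ≤ r) (hrs : r ≤ s) :
    x ^ r ≤ x + x ^ s := by
  rcases le_total x 1 with hx1 | hx1
  · have : x ^ r ≤ x := by
      simpa using rpow_le_rpow_of_exponent_ge' hx hx1 zero_le_one hr
    linarith [rpow_nonneg hx s]
  · linarith [rpow_le_rpow_of_exponent_le hx1 hrs]

end Real

lemma ContinuousLinearMap.abs_apply_le_of_opNorm_rpow_le {V : Type*} [SeminormedAddCommGroup V]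
    [NormedSpace ℝ V] {p q a : ℝ} (hpq : p.HolderConjugate q) (A : V →L[ℝ] ℝ) (x : V)
    (hA : ‖A‖ ^ q ≤ a) : |A x| ≤ a + ‖x‖ ^ p :=
  calc |A x| = ‖A x‖ := (norm_eq_abs _).symm
    _ ≤ ‖A‖ * ‖x‖ := A.le_opNorm x
    _ ≤ ‖A‖ ^ q + ‖x‖ ^ p := mul_le_rpow_add_rpow hpq (norm_nonneg A) (norm_nonneg x)
    _ ≤ a + ‖x‖ ^ p := by gcongr

/-- If a continuous linear functional `A` on a normed space `V` satisfies the
growth bound `‖A‖^{α/(α−1)} ≤ (f + K‖x‖^α)(1 + h^β)`, then there is a constant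
`C` depending only on `α, β, K, p₀` (and not on `V`, `x`, `A`, `f` or `h`) with
`|A x| ≤ C(f + f^{p₀/2} + ‖x‖^α + h^β‖x‖^α + (1 + h)^{p₀})`. -/
theorem pairing_bound_of_growth (α β p₀ K : ℝ)
    (hα : 1 < α) (hβ : 0 ≤ β) (hp₀ : β + 2 ≤ p₀) (hK : 0 ≤ K) :
    ∃ C : ℝ, ∀ (V : Type*) [NormedAddCommGroup V] [NormedSpace ℝ V]
      (A : V →L[ℝ] ℝ) (x : V) (f h : ℝ), 0 ≤ f → 0 ≤ h →
      ‖A‖ ^ (α / (α - 1)) ≤ (f + K * ‖x‖ ^ α) * (1 + h ^ β) →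
      |A x| ≤ C * (f + f ^ (p₀ / 2) + ‖x‖ ^ α + h ^ β * ‖x‖ ^ α + (1 + h) ^ p₀) := by
  refine ⟨K + 2, fun V _ _ A x f h hf hh hA ↦ ?_⟩
  have hpair := A.abs_apply_le_of_opNorm_rpow_le (HolderConjugate.conjExponent hα) x hA
  have hcross : f * h ^ β ≤ f + f ^ (p₀ / 2) + (1 + h) ^ p₀ := by
    have hr : 1 ≤ p₀ / (p₀ - β) := (one_le_div (by linarith)).2 (by linarith)
    have hrp : p₀ / (p₀ - β) ≤ p₀ / 2 :=
      div_le_div_of_nonneg_left (by linarith) two_pos (by linarith)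
    linarith [mul_rpow_le_rpow_add_rpow hf hh hβ (by linarith : β < p₀),
      rpow_le_self_add_rpow hf hr hrp,
      rpow_le_rpow hh (by linarith : h ≤ 1 + h) (by linarith : 0 ≤ p₀)]
  have hX : 0 ≤ ‖x‖ ^ α := rpow_nonneg (norm_nonneg x) α
  have hH : 0 ≤ h ^ β := rpow_nonneg hh β
  have hF : 0 ≤ f ^ (p₀ / 2) := rpow_nonneg hf _
  have hP : 0 ≤ (1 + h) ^ p₀ := rpow_nonneg (by linarith) _
  nlinarith [mul_nonneg hH hX, mul_nonneg hK hf, mul_nonneg hK hF, mul_nonneg hK hP]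
end
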